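/- Let V be a finite set and E : V → V → Prop an acyclic directed edge relation, with coverage generating function P_{f,g}(p) = ∑_n N_n(f,g)·pⁿ and critical parameter p_c(f,g) = inf { p ∈ [0,1] : P_{f,g}(p) ≥ 1 } (set to 1 if this set is empty). Then for all f, h, g ∈ V, p_c(f,g) ≤ max( p_c(f,h), p_c(h,g) ). -/

import Mathlib

open scoped BigOperators

/-- A walk of length `n` from `f` to `g` in the directed graph `(V, E)`:
a function `w : Fin (n+1) → V` with `w 0 = f`, `w n = g`, and
`E (w i) (w (i+1))` for all `i < n`. -/
def IsWalk {V : Type*} (E : V → V → Prop) (n : ℕ) (f g : V)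
    (w : Fin (n + 1) → V) : Prop :=
  w 0 = f ∧ w (Fin.last n) = g ∧ ∀ i : Fin n, E (w i.castSucc) (w i.succ)

/-- `N_n(f,g)`: the number of walks of length `n` from `f` to `g`. -/
noncomputable def numWalks {V : Type*} (E : V → V → Prop) (n : ℕ) (f g : V) : ℕ :=
  Nat.card {w : Fin (n + 1) → V // IsWalk E n f g w}

/-- The coverage generating function `P_{f,g}(p) = ∑ₙ N_n(f,g) pⁿ`. -/
noncomputable def covGF {V : Type*} (E : V → V → Prop) (f g : V) (p : ℝ) : ℝ :=
  ∑' n : ℕ, (numWalks E n f g : ℝ) * p ^ n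

/-- The edge relation is acyclic: no walks of positive length from a vertex to itself. -/
def Acyclic {V : Type*} (E : V → V → Prop) : Prop :=
  ∀ f : V, ∀ n : ℕ, 1 ≤ n → numWalks E n f f = 0

/-- The critical parameter `p_c(f,g) = inf { p ∈ [0,1] : P_{f,g}(p) ≥ 1 }`,
equal to `1` when the set is empty (adjoining `1` to the set changes nothing
when it is nonempty, since the set is contained in `[0,1]`). -/
noncomputable def critParam {V : Type*} (E : V → V → Prop) (f g : V) : ℝ :=
  sInf ({p : ℝ | p ∈ Set.Icc (0 : ℝ) 1 ∧ 1 ≤ covGF E f g p} ∪ {1})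

/-- The coverage index `R_c(f,g) = 1 - p_c(f,g)`. -/
noncomputable def covIndex {V : Type*} (E : V → V → Prop) (f g : V) : ℝ :=
  1 - critParam E f g

/-! In an acyclic graph a walk never revisits a vertex, so walks have length `< |V|` and every
`P_{f,g}` is a polynomial with nonnegative coefficients, hence monotone on `[0, ∞)`. Splitting a
walk from `f` to `g` at its (unique) visit of `h` shows that concatenation injects pairs of walks
`f → h`, `h → g` into walks `f → g`, so `P_{f,h}(p) · P_{h,g}(p) ≤ P_{f,g}(p)` for `p ≥ 0`.
Above both critical parameters both factors are `≥ 1`, hence so is `P_{f,g}(p)`. -/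

open Finset

section Walks

variable {V : Type*} {E : V → V → Prop}

lemma numWalks_ne_zero [Finite V] {n : ℕ} {f g : V} {w : Fin (n + 1) → V}
    (hw : IsWalk E n f g w) : numWalks E n f g ≠ 0 :=
  Nat.card_ne_zero.2 ⟨⟨⟨w, hw⟩⟩, inferInstance⟩

namespace IsWalk

variable {n : ℕ} {f g : V} {w : Fin (n + 1) → V}

lemma edge (hw : IsWalk E n f g w) {i : ℕ} (hi : i < n) :
    E (w ⟨i, by omega⟩) (w ⟨i + 1, by omega⟩) :=
  hw.2.2 ⟨i, hi⟩

lemma segment (hw : IsWalk E n f g w) {i j : ℕ} (hij : i ≤ j) (hj : j ≤ n) :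
    IsWalk E (j - i) (w ⟨i, by omega⟩) (w ⟨j, by omega⟩) fun k => w ⟨i + k, by omega⟩ :=
  ⟨rfl, congrArg w (Fin.ext (by simp only [Fin.val_last]; omega)),
    fun ⟨k, hk⟩ => hw.edge (i := i + k) (by omega)⟩

lemma injective [Finite V] (hE : Acyclic E) (hw : IsWalk E n f g w) : Function.Injective w := by
  refine Function.Injective.of_lt_imp_ne fun ⟨i, hi⟩ ⟨j, hj⟩ hij heq => ?_
  rw [Fin.mk_lt_mk] at hij
  have hloop := hw.segment hij.le (by omega)
  rw [← heq] at hloop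
  exact numWalks_ne_zero hloop (hE _ _ (by omega))

end IsWalk

lemma numWalks_eq_zero_of_card_le [Finite V] (hE : Acyclic E) {n : ℕ} (hn : Nat.card V ≤ n)
    (f g : V) : numWalks E n f g = 0 :=
  Nat.card_eq_zero.2 <| Or.inl ⟨fun ⟨w, hw⟩ => by
    have := Nat.card_le_card_of_injective w (hw.injective hE)
    simp only [Nat.card_eq_fintype_card, Fintype.card_fin] at this
    omega⟩

def walkConcat {a b k : ℕ} (hab : a + b = k) (w₁ : Fin (a + 1) → V) (w₂ : Fin (b + 1) → V) :
    Fin (k + 1) → V :=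
  fun i => if hi : (i : ℕ) ≤ a then w₁ ⟨i, by omega⟩ else w₂ ⟨i - a, by omega⟩

section walkConcat

variable {a b k : ℕ} (hab : a + b = k) {w₁ : Fin (a + 1) → V} {w₂ : Fin (b + 1) → V}

lemma walkConcat_apply_of_le {i : ℕ} (hi : i ≤ a) :
    walkConcat hab w₁ w₂ ⟨i, by omega⟩ = w₁ ⟨i, by omega⟩ :=
  dif_pos hi

lemma walkConcat_apply_add (hjoin : w₁ (Fin.last a) = w₂ 0) {j : ℕ} (hj : j ≤ b) :
    walkConcat hab w₁ w₂ ⟨a + j, by omega⟩ = w₂ ⟨j, by omega⟩ := by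
  rcases j.eq_zero_or_pos with rfl | hj0
  · exact (dif_pos le_rfl).trans hjoin
  · refine (dif_neg (by dsimp only; omega)).trans ?_
    simp

end walkConcat

lemma IsWalk.concat {a b k : ℕ} {f h g : V} {w₁ : Fin (a + 1) → V} {w₂ : Fin (b + 1) → V}
    (hw₁ : IsWalk E a f h w₁) (hw₂ : IsWalk E b h g w₂) (hab : a + b = k) :
    IsWalk E k f g (walkConcat hab w₁ w₂) := by
  have hjoin : w₁ (Fin.last a) = w₂ 0 := hw₁.2.1.trans hw₂.1.symm
  refine ⟨(walkConcat_apply_of_le hab (Nat.zero_le a)).trans hw₁.1, ?_, ?_⟩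
  · subst hab
    exact (walkConcat_apply_add rfl hjoin le_rfl).trans hw₂.2.1
  · rintro ⟨i, hi⟩
    show E (walkConcat hab w₁ w₂ ⟨i, by omega⟩) (walkConcat hab w₁ w₂ ⟨i + 1, by omega⟩)
    rcases lt_or_ge i a with hia | hia
    · rw [walkConcat_apply_of_le hab hia.le, walkConcat_apply_of_le hab hia]
      exact hw₁.edge hia
    · obtain ⟨j, rfl⟩ := Nat.exists_eq_add_of_le hia
      show E (walkConcat hab w₁ w₂ ⟨a + j, by omega⟩)
        (walkConcat hab w₁ w₂ ⟨a + (j + 1), by omega⟩)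
      rw [walkConcat_apply_add hab hjoin (by omega), walkConcat_apply_add hab hjoin (by omega)]
      exact hw₂.edge (by omega)

end Walks

section Counting

variable {V : Type*} [Finite V] {E : V → V → Prop}

lemma sum_antidiagonal_numWalks_mul_le (hE : Acyclic E) (f h g : V) (k : ℕ) :
    ∑ x ∈ antidiagonal k, numWalks E x.1 f h * numWalks E x.2 h g ≤ numWalks E k f g := by
  let Splits := Σ x : antidiagonal k,
    {w // IsWalk E x.1.1 f h w} × {w // IsWalk E x.1.2 h g w}
  let concat : Splits → {w // IsWalk E k f g w} := fun ⟨x, w₁, w₂⟩ =>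
    ⟨walkConcat (HasAntidiagonal.mem_antidiagonal.1 x.2) w₁.1 w₂.1, w₁.2.concat w₂.2 _⟩
  have hcard : Nat.card Splits =
      ∑ x ∈ antidiagonal k, numWalks E x.1 f h * numWalks E x.2 h g := by
    rw [Nat.card_sigma, ← sum_coe_sort (antidiagonal k)]
    simp only [Nat.card_prod, numWalks]
  rw [← hcard]
  refine Nat.card_le_card_of_injective concat ?_
  rintro ⟨⟨x, hx⟩, ⟨w₁, hw₁⟩, ⟨w₂, hw₂⟩⟩ ⟨⟨x', hx'⟩, ⟨w₁', hw₁'⟩, ⟨w₂', hw₂'⟩⟩ heq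
  have hab := HasAntidiagonal.mem_antidiagonal.1 hx
  have hab' := HasAntidiagonal.mem_antidiagonal.1 hx'
  replace heq : walkConcat hab w₁ w₂ = walkConcat hab' w₁' w₂' := congrArg Subtype.val heq
  have hjoin : w₁ (Fin.last x.1) = w₂ 0 := hw₁.2.1.trans hw₂.1.symm
  have hjoin' : w₁' (Fin.last x'.1) = w₂' 0 := hw₁'.2.1.trans hw₂'.1.symm
  obtain rfl : x = x' := by
    have hsplit :
        walkConcat hab w₁ w₂ ⟨x.1, by omega⟩ = walkConcat hab w₁ w₂ ⟨x'.1, by omega⟩ := by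
      rw [walkConcat_apply_of_le hab le_rfl, heq, walkConcat_apply_of_le hab' le_rfl]
      exact hw₁.2.1.trans hw₁'.2.1.symm
    have h1 : x.1 = x'.1 := by simpa using (hw₁.concat hw₂ hab).injective hE hsplit
    exact Prod.ext h1 (by omega)
  obtain rfl : w₁ = w₁' := funext fun ⟨i, hi⟩ => by
    change i < x.1 + 1 at hi
    rw [← walkConcat_apply_of_le hab (w₁ := w₁) (w₂ := w₂) (by omega), heq,
      walkConcat_apply_of_le hab' (by omega)]
  obtain rfl : w₂ = w₂' := funext fun ⟨j, hj⟩ => by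
    change j < x.2 + 1 at hj
    rw [← walkConcat_apply_add hab hjoin (by omega), heq,
      walkConcat_apply_add hab' hjoin' (by omega)]
  rfl

end Counting

section GeneratingFunction

variable {V : Type*} [Finite V] {E : V → V → Prop}

lemma summable_norm_numWalks_mul_pow (hE : Acyclic E) (f g : V) (p : ℝ) :
    Summable fun n => ‖(numWalks E n f g : ℝ) * p ^ n‖ :=
  summable_of_ne_finset_zero (s := range (Nat.card V)) fun n hn => by
    rw [numWalks_eq_zero_of_card_le hE (by simpa using hn)]
    simp

lemma covGF_mono (hE : Acyclic E) (f g : V) {s p : ℝ} (hs : 0 ≤ s) (hsp : s ≤ p) :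
    covGF E f g s ≤ covGF E f g p :=
  Summable.tsum_le_tsum
    (fun n => mul_le_mul_of_nonneg_left (pow_le_pow_left₀ hs hsp n) (Nat.cast_nonneg _))
    (summable_norm_numWalks_mul_pow hE f g s).of_norm
    (summable_norm_numWalks_mul_pow hE f g p).of_norm

lemma covGF_mul_covGF_le (hE : Acyclic E) (f h g : V) {p : ℝ} (hp : 0 ≤ p) :
    covGF E f h p * covGF E h g p ≤ covGF E f g p := by
  have hterm (k : ℕ) : ∑ x ∈ antidiagonal k,
      (numWalks E x.1 f h : ℝ) * p ^ x.1 * ((numWalks E x.2 h g : ℝ) * p ^ x.2)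
        ≤ numWalks E k f g * p ^ k := calc
    _ = ((∑ x ∈ antidiagonal k, numWalks E x.1 f h * numWalks E x.2 h g : ℕ) : ℝ) * p ^ k := by
      push_cast
      rw [sum_mul]
      refine sum_congr rfl fun x hx => ?_
      rw [← HasAntidiagonal.mem_antidiagonal.1 hx, pow_add]
      ring
    _ ≤ numWalks E k f g * p ^ k := by
      gcongr
      exact sum_antidiagonal_numWalks_mul_le hE f h g k
  have hsum := (summable_norm_numWalks_mul_pow hE f g p).of_norm
  rw [covGF, covGF, covGF, tsum_mul_tsum_eq_tsum_sum_antidiagonal_of_summable_norm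
    (summable_norm_numWalks_mul_pow hE f h p) (summable_norm_numWalks_mul_pow hE h g p)]
  refine Summable.tsum_le_tsum hterm (Summable.of_nonneg_of_le (fun k => ?_) hterm hsum) hsum
  exact sum_nonneg fun x _ => by positivity

end GeneratingFunction

section CriticalParameter

variable {V : Type*} {E : V → V → Prop}

def critSet (E : V → V → Prop) (f g : V) : Set ℝ :=
  {p : ℝ | p ∈ Set.Icc (0 : ℝ) 1 ∧ 1 ≤ covGF E f g p} ∪ {1}

lemma one_mem_critSet (f g : V) : (1 : ℝ) ∈ critSet E f g := Or.inr rfl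

lemma zero_mem_lowerBounds_critSet (f g : V) : (0 : ℝ) ∈ lowerBounds (critSet E f g) := by
  rintro p (⟨⟨hp, -⟩, -⟩ | rfl)
  exacts [hp, zero_le_one]

lemma critParam_nonneg (f g : V) : 0 ≤ critParam E f g :=
  le_csInf ⟨1, one_mem_critSet f g⟩ (zero_mem_lowerBounds_critSet f g)

lemma critParam_le_of_mem_critSet {f g : V} {p : ℝ} (hp : p ∈ critSet E f g) :
    critParam E f g ≤ p :=
  csInf_le ⟨0, zero_mem_lowerBounds_critSet f g⟩ hp

lemma one_le_covGF_of_critParam_lt [Finite V] (hE : Acyclic E) {f g : V} {p : ℝ}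
    (hlt : critParam E f g < p) (hp : p ≤ 1) : 1 ≤ covGF E f g p := by
  obtain ⟨s, hs, hsp⟩ := exists_lt_of_csInf_lt (s := critSet E f g) ⟨1, one_mem_critSet f g⟩ hlt
  rcases hs with ⟨⟨hs0, -⟩, hs⟩ | rfl
  · exact hs.trans (covGF_mono hE f g hs0 hsp.le)
  · exact absurd hp hsp.not_ge

end CriticalParameter

/-- `p_c(f,g) ≤ max (p_c(f,h), p_c(h,g))`. -/
theorem stmt_3 {V : Type*} [Fintype V] (E : V → V → Prop) (hE : Acyclic E)
    (f h g : V) :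
    critParam E f g ≤ max (critParam E f h) (critParam E h g) := by
  refine le_of_forall_gt_imp_ge_of_dense fun p hp => ?_
  rcases le_or_gt p 1 with hp1 | hp1
  · have hfh := one_le_covGF_of_critParam_lt hE ((le_max_left _ _).trans_lt hp) hp1
    have hhg := one_le_covGF_of_critParam_lt hE ((le_max_right _ _).trans_lt hp) hp1
    have hp0 : 0 ≤ p := (critParam_nonneg f h).trans ((le_max_left _ _).trans hp.le)
    refine critParam_le_of_mem_critSet (Or.inl ⟨⟨hp0, hp1⟩, ?_⟩)
    calc 1 ≤ covGF E f h p * covGF E h g p := one_le_mul_of_one_le_of_one_le hfh hhg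
      _ ≤ covGF E f g p := covGF_mul_covGF_le hE f h g hp0
  · exact (critParam_le_of_mem_critSet (one_mem_critSet f g)).trans hp1.le
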